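/- Let k ≥ 3 be an odd integer and let D be a k-quasi-transitive digraph with a unique initial strong component C. If v is a vertex of C satisfying Δ⁺_C ≥ d⁺(v) > Δ⁺_C − (k−1)/2 (out-degrees taken in C), then v is a (k+1)-king of D. -/

import Mathlib

variable {V : Type*}

/-- A directed path of length `n` from `u` to `v` in the digraph with arc relation `A`:
a sequence of `n + 1` pairwise distinct vertices, consecutive ones joined by arcs. -/
def HasPathN (A : V → V → Prop) (u v : V) (n : ℕ) : Prop :=
  ∃ f : Fin (n + 1) → V, Function.Injective f ∧ f 0 = u ∧ f (Fin.last n) = v ∧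
    ∀ i : Fin n, A (f i.castSucc) (f i.succ)

/-- The distance from `u` to `v`: the length of a shortest directed path from `u` to `v`,
`⊤` if there is no such path. -/
noncomputable def ddist (A : V → V → Prop) (u v : V) : ℕ∞ :=
  sInf {n : ℕ∞ | ∃ m : ℕ, n = (m : ℕ∞) ∧ HasPathN A u v m}

/-- `D` is `k`-quasi-transitive if for every directed path `(v_0, …, v_k)` of length `k`,
either `(v_0, v_k)` or `(v_k, v_0)` is an arc. -/
def KQuasiTrans (A : V → V → Prop) (k : ℕ) : Prop :=
  ∀ u v : V, HasPathN A u v k → A u v ∨ A v u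

/-- A vertex `v` is an `r`-king if every vertex is within distance `r` from `v`. -/
def IsRKing (A : V → V → Prop) (r : ℕ) (v : V) : Prop :=
  ∀ u : V, ddist A v u ≤ (r : ℕ∞)

/-- `u` reaches `v` by a directed path. -/
def Reaches (A : V → V → Prop) (u v : V) : Prop :=
  ∃ n : ℕ, HasPathN A u v n

/-- A strong component: the set of all vertices mutually reachable with some vertex. -/
def IsStrongComponent (A : V → V → Prop) (S : Set V) : Prop :=
  ∃ v : V, S = {u | Reaches A u v ∧ Reaches A v u}

/-- An initial strong component: a strong component receiving no arcs from outside. -/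
def IsInitialStrongComponent (A : V → V → Prop) (S : Set V) : Prop :=
  IsStrongComponent A S ∧ ∀ u v : V, u ∉ S → v ∈ S → ¬ A u v

/-- The out-degree of `v` in `D`. -/
noncomputable def outDeg (A : V → V → Prop) (v : V) : ℕ :=
  {u : V | A v u}.ncard

/-- The out-degree of `v` in the subdigraph of `D` induced by `C`. -/
noncomputable def outDegIn (A : V → V → Prop) (C : Set V) (v : V) : ℕ :=
  {u ∈ C | A v u}.ncard

/-- The maximum out-degree of the subdigraph induced by `C`. -/
noncomputable def maxOutDegIn (A : V → V → Prop) (C : Set V) : ℕ :=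
  sSup (outDegIn A C '' C)

/-! Since `C` is the unique initial strong component, `v` reaches every vertex. If some `u` had
`d(v, u) ≥ k + 2`, take a shortest path `v = x_0 → x_1 → ⋯ → x_{k+2}` towards `u`. It has no
shortcut `x_i → x_j` with `j ≥ i + 2`, so a path of length `k` from `x_a` to `x_b` with
`a ≥ b + 2` forces `x_a → x_b`. Such paths give `x_k → x_0`, then `x_a → x_s ⇒ x_a → x_{s-2}`
for `a ∈ {k+1, k+2}`, hence `x_{k+2} → x_0` (so all `x_j` lie in `C`) and, for odd `k`, arcs
from `x_{k+1}` to `x_{k+2}, x_{k-2}, x_{k-4}, …, x_3`, none of which is an out-neighbour of `v`.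
A path `x_{k+1} ⇝ x_0 → y` of length `k` shows that `x_{k+1}` also dominates every
out-neighbour `y` of `v`. Thus `d⁺_C(x_{k+1}) ≥ d⁺_C(v) + (k - 1)/2 > Δ⁺_C`, a contradiction. -/

/-- The `ℕ`-indexed form of `HasPathN`, which is easier to reindex. -/
def IsPathSeq (A : V → V → Prop) (f : ℕ → V) (m : ℕ) : Prop :=
  Set.InjOn f (Set.Iic m) ∧ ∀ i < m, A (f i) (f (i + 1))

section Paths

variable {A : V → V → Prop}

theorem IsPathSeq.hasPathN {f : ℕ → V} {m : ℕ} (hf : IsPathSeq A f m) :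
    HasPathN A (f 0) (f m) m :=
  ⟨fun i => f i, fun i j hij => Fin.ext (hf.1 (Set.mem_Iic.2 (Nat.lt_succ_iff.1 i.2))
    (Set.mem_Iic.2 (Nat.lt_succ_iff.1 j.2)) hij), rfl, rfl, fun i => hf.2 i i.2⟩

theorem hasPathN_iff_exists_isPathSeq {u v : V} {n : ℕ} :
    HasPathN A u v n ↔ ∃ f, IsPathSeq A f n ∧ f 0 = u ∧ f n = v := by
  refine ⟨?_, fun ⟨f, hf, h0, hn⟩ => h0 ▸ hn ▸ hf.hasPathN⟩
  rintro ⟨f, hinj, h0, hn, harc⟩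
  refine ⟨fun i => f ⟨min i n, by omega⟩, ⟨fun i hi j hj hij => ?_, fun i hi => ?_⟩, ?_, ?_⟩
  · have := congrArg Fin.val (hinj hij)
    simp only [Set.mem_Iic] at hi hj
    simpa [Nat.min_eq_left hi, Nat.min_eq_left hj] using this
  · convert harc ⟨i, hi⟩ using 2 <;> simp [Fin.ext_iff] <;> omega
  · convert h0 using 2; simp
  · convert hn using 2; simp [Fin.ext_iff]

theorem IsPathSeq.segment {f : ℕ → V} {m : ℕ} (hf : IsPathSeq A f m) {c l : ℕ}
    (hcl : c + l ≤ m) : IsPathSeq A (fun i => f (c + i)) l :=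
  ⟨fun i hi j hj hij => by
    simp only [Set.mem_Iic] at hi hj
    have := hf.1 (Set.mem_Iic.2 (by omega : c + i ≤ m)) (Set.mem_Iic.2 (by omega : c + j ≤ m)) hij
    omega,
   fun i hi => hf.2 (c + i) (by omega)⟩

theorem IsPathSeq.snoc {f : ℕ → V} {m : ℕ} {y : V} (hf : IsPathSeq A f m) (hy : A (f m) y)
    (hnew : ∀ i ≤ m, f i ≠ y) : IsPathSeq A (Function.update f (m + 1) y) (m + 1) := by
  have hold : ∀ i ≤ m, Function.update f (m + 1) y i = f i := fun i hi =>
    Function.update_of_ne (by omega) _ _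
  refine ⟨fun i hi j hj hij => ?_, fun i hi => ?_⟩
  · simp only [Set.mem_Iic] at hi hj
    rcases (show i ≤ m ∨ i = m + 1 by omega) with hi | rfl <;>
      rcases (show j ≤ m ∨ j = m + 1 by omega) with hj | rfl
    · rw [hold i hi, hold j hj] at hij
      exact hf.1 (Set.mem_Iic.2 hi) (Set.mem_Iic.2 hj) hij
    · rw [hold i hi, Function.update_self] at hij
      exact absurd hij (hnew i hi)
    · rw [hold j hj, Function.update_self] at hij
      exact absurd hij.symm (hnew j hj)
    · rfl
  · rcases (show i < m ∨ i = m by omega) with hi | rfl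
    · rw [hold i hi.le, hold (i + 1) hi]
      exact hf.2 i hi
    · rw [hold i le_rfl, Function.update_self]
      exact hy

theorem exists_hasPathN_le_of_arc {u p q : V} {n : ℕ} (h : HasPathN A u p n) (hpq : A p q) :
    ∃ t ≤ n + 1, HasPathN A u q t := by
  obtain ⟨f, hf, rfl, rfl⟩ := hasPathN_iff_exists_isPathSeq.1 h
  by_cases hq : ∃ i ≤ n, f i = q
  · obtain ⟨i, hi, rfl⟩ := hq
    exact ⟨i, by omega, by simpa using (hf.segment (c := 0) (l := i) (by omega)).hasPathN⟩
  · push Not at hq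
    refine ⟨n + 1, le_rfl, ?_⟩
    simpa using (hf.snoc hpq hq).hasPathN

theorem ddist_le_of_hasPathN {u v : V} {m : ℕ} (h : HasPathN A u v m) : ddist A u v ≤ m :=
  sInf_le ⟨m, rfl, h⟩

theorem ddist_self (u : V) : ddist A u u = 0 :=
  nonpos_iff_eq_zero.1 (ddist_le_of_hasPathN (IsPathSeq.hasPathN (A := A) (f := fun _ => u)
    ⟨fun i hi j hj _ => by simp_all, fun i hi => by omega⟩))

theorem exists_hasPathN_eq_ddist {u v : V} (h : Reaches A u v) :
    ∃ m : ℕ, ddist A u v = m ∧ HasPathN A u v m :=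
  csInf_mem (⟨_, h.choose, rfl, h.choose_spec⟩ :
    {n : ℕ∞ | ∃ m : ℕ, n = (m : ℕ∞) ∧ HasPathN A u v m}.Nonempty) |>.imp fun _ h => ⟨h.1, h.2⟩

theorem ddist_ne_top_iff {u v : V} : ddist A u v ≠ ⊤ ↔ Reaches A u v := by
  refine ⟨fun h => ?_, fun h => ?_⟩
  · by_contra hr
    refine h (sInf_eq_top.2 ?_)
    rintro _ ⟨m, rfl, hm⟩
    exact absurd ⟨m, hm⟩ hr
  · obtain ⟨m, hm, -⟩ := exists_hasPathN_eq_ddist h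
    simp [hm]

theorem ddist_le_add_one_of_arc {u p q : V} (hpq : A p q) : ddist A u q ≤ ddist A u p + 1 := by
  by_cases hr : Reaches A u p
  · obtain ⟨m, hm, hp⟩ := exists_hasPathN_eq_ddist hr
    obtain ⟨t, ht, hq⟩ := exists_hasPathN_le_of_arc hp hpq
    rw [hm]
    exact (ddist_le_of_hasPathN hq).trans (by exact_mod_cast ht)
  · simp [not_not.1 (mt ddist_ne_top_iff.1 hr)]

theorem IsPathSeq.ddist_le {f : ℕ → V} {m : ℕ} (hf : IsPathSeq A f m) (u : V) :
    ∀ i ≤ m, ddist A u (f i) ≤ ddist A u (f 0) + i := by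
  intro i
  induction i with
  | zero => simp
  | succ i ih =>
    intro hi
    calc ddist A u (f (i + 1)) ≤ ddist A u (f i) + 1 := ddist_le_add_one_of_arc (hf.2 i hi)
      _ ≤ ddist A u (f 0) + i + 1 := by gcongr; exact ih (by omega)
      _ = ddist A u (f 0) + (i + 1 : ℕ) := by push_cast; ring

theorem ddist_triangle (a b c : V) : ddist A a c ≤ ddist A a b + ddist A b c := by
  by_cases hr : Reaches A b c
  · obtain ⟨m, hm, hp⟩ := exists_hasPathN_eq_ddist hr
    obtain ⟨f, hf, rfl, rfl⟩ := hasPathN_iff_exists_isPathSeq.1 hp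
    rw [hm]
    exact hf.ddist_le a m le_rfl
  · simp [not_not.1 (mt ddist_ne_top_iff.1 hr)]

theorem Reaches.trans {a b c : V} (hab : Reaches A a b) (hbc : Reaches A b c) :
    Reaches A a c := by
  rw [← ddist_ne_top_iff] at *
  exact ne_top_of_le_ne_top (WithTop.add_ne_top.2 ⟨hab, hbc⟩) (ddist_triangle a b c)

theorem reaches_refl (a : V) : Reaches A a a :=
  ddist_ne_top_iff.1 (by simp [ddist_self])

theorem reaches_of_arc {a b : V} (hab : A a b) : Reaches A a b :=
  ddist_ne_top_iff.1 (ne_top_of_le_ne_top (by simp [ddist_self])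
    (ddist_le_add_one_of_arc (u := a) hab))

end Paths

section Components

variable {A : V → V → Prop}

theorem IsStrongComponent.reaches {S : Set V} (hS : IsStrongComponent A S) {v w : V}
    (hv : v ∈ S) (hw : w ∈ S) : Reaches A v w := by
  obtain ⟨c, rfl⟩ := hS
  exact hv.1.trans hw.2

theorem IsStrongComponent.mem_of_reaches {S : Set V} (hS : IsStrongComponent A S) {v z : V}
    (hv : v ∈ S) (hvz : Reaches A v z) (hzv : Reaches A z v) : z ∈ S := by
  obtain ⟨c, rfl⟩ := hS
  exact ⟨hzv.trans hv.1, hv.2.trans hvz⟩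

/-- A vertex that is minimal for reachability spans an initial strong component. -/
theorem exists_isInitialStrongComponent_reaches [Finite V] (u : V) :
    ∃ S, IsInitialStrongComponent A S ∧ ∃ w ∈ S, Reaches A w u := by
  let r : V → V → Prop := fun x w => Reaches A x w ∧ ¬ Reaches A w x
  have : IsTrans V r :=
    ⟨fun a b c hab hbc => ⟨hab.1.trans hbc.1, fun hca => hbc.2 (hca.trans hab.1)⟩⟩
  have : Std.Irrefl r := ⟨fun a h => h.2 h.1⟩
  obtain ⟨w, hwu, hmin⟩ := (Finite.wellFounded_of_trans_of_irrefl r).has_min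
    {z | Reaches A z u} ⟨u, reaches_refl u⟩
  have hback : ∀ x, Reaches A x w → Reaches A w x := fun x hxw =>
    not_not.1 fun hwx => hmin x (hxw.trans hwu) ⟨hxw, hwx⟩
  refine ⟨{z | Reaches A z w ∧ Reaches A w z}, ⟨⟨w, rfl⟩, fun a b ha hb hab => ha ?_⟩,
    w, ⟨reaches_refl w, reaches_refl w⟩, hwu⟩
  have haw : Reaches A a w := (reaches_of_arc hab).trans hb.1
  exact ⟨haw, hback a haw⟩

theorem reaches_of_mem_unique_initial [Finite V] {C : Set V} (hC : IsInitialStrongComponent A C)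
    (huniq : ∀ S, IsInitialStrongComponent A S → S = C) {v : V} (hv : v ∈ C) (u : V) :
    Reaches A v u := by
  obtain ⟨S, hS, w, hw, hwu⟩ := exists_isInitialStrongComponent_reaches (A := A) u
  rw [huniq S hS] at hw
  exact (hC.1.reaches hv hw).trans hwu

end Components

section Degrees

variable {A : V → V → Prop} {C : Set V}

theorem outDegIn_le_maxOutDegIn [Finite V] {w : V} (hw : w ∈ C) :
    outDegIn A C w ≤ maxOutDegIn A C :=
  le_csSup (Set.toFinite _).bddAbove ⟨w, hw, rfl⟩

theorem outDegIn_add_ncard_le [Finite V] {v w : V} {E : Set V}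
    (hvw : ∀ y ∈ C, A v y → A w y) (hEC : E ⊆ C) (hEw : ∀ e ∈ E, A w e)
    (hEv : ∀ e ∈ E, ¬ A v e) : outDegIn A C v + E.ncard ≤ outDegIn A C w := by
  have hdisj : Disjoint {y ∈ C | A v y} E :=
    Set.disjoint_right.2 fun e he hv => hEv e he hv.2
  rw [outDegIn, outDegIn, ← Set.ncard_union_eq hdisj]
  exact Set.ncard_le_ncard (Set.union_subset (fun y hy => ⟨hy.1, hvw y hy.1 hy.2⟩)
    fun e he => ⟨hEC he, hEw e he⟩)

end Degrees

def IsGeodesic (A : V → V → Prop) (X : ℕ → V) (n : ℕ) : Prop :=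
  (∀ i < n, A (X i) (X (i + 1))) ∧ ∀ j ≤ n, ddist A (X 0) (X j) = j

section Geodesics

variable {A : V → V → Prop} {X : ℕ → V} {n : ℕ}

theorem IsGeodesic.mono (hX : IsGeodesic A X n) {m : ℕ} (hmn : m ≤ n) : IsGeodesic A X m :=
  ⟨fun i hi => hX.1 i (by omega), fun j hj => hX.2 j (by omega)⟩

theorem IsGeodesic.injOn (hX : IsGeodesic A X n) : Set.InjOn X (Set.Iic n) := by
  intro i hi j hj hij
  have := (hX.2 i hi).symm.trans (hij ▸ hX.2 j hj)
  exact_mod_cast this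

theorem IsGeodesic.isPathSeq (hX : IsGeodesic A X n) : IsPathSeq A X n :=
  ⟨hX.injOn, hX.1⟩

theorem IsGeodesic.not_arc (hX : IsGeodesic A X n) {i j : ℕ} (hij : i + 2 ≤ j) (hj : j ≤ n) :
    ¬ A (X i) (X j) := by
  intro h
  have := ddist_le_add_one_of_arc (u := X 0) h
  rw [hX.2 i (by omega), hX.2 j hj] at this
  norm_cast at this
  omega

theorem IsGeodesic.reaches (hX : IsGeodesic A X n) {i j : ℕ} (hij : i ≤ j) (hj : j ≤ n) :
    Reaches A (X i) (X j) :=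
  ⟨j - i, by simpa [Nat.add_sub_cancel' hij] using
    (hX.isPathSeq.segment (c := i) (l := j - i) (by omega)).hasPathN⟩

/-- A shortcut to `f j` would shorten the whole path. -/
theorem IsPathSeq.isGeodesic {f : ℕ → V} {m : ℕ} (hf : IsPathSeq A f m)
    (hm : ddist A (f 0) (f m) = m) : IsGeodesic A f m := by
  refine ⟨hf.2, fun j hj => le_antisymm ?_ ?_⟩
  · simpa [ddist_self] using hf.ddist_le (f 0) j hj
  · have hle : ddist A (f 0) (f j) ≤ j := by
      simpa [ddist_self] using hf.ddist_le (f 0) j hj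
    obtain ⟨c, hc⟩ := ENat.ne_top_iff_exists.1 (ne_top_of_le_ne_top (ENat.natCast_ne_top j) hle)
    have hrest : ddist A (f 0) (f m) ≤ ddist A (f 0) (f j) + (m - j : ℕ) := by
      simpa [Nat.add_sub_cancel' hj] using
        (hf.segment (c := j) (l := m - j) (by omega)).ddist_le (f 0) (m - j) le_rfl
    rw [hm, ← hc] at hrest
    rw [← hc]
    norm_cast at hrest ⊢
    omega

theorem exists_isGeodesic {u v : V} (h : Reaches A v u) (hn : (n : ℕ∞) ≤ ddist A v u) :
    ∃ X, X 0 = v ∧ IsGeodesic A X n := by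
  obtain ⟨m, hm, hp⟩ := exists_hasPathN_eq_ddist h
  obtain ⟨f, hf, rfl, rfl⟩ := hasPathN_iff_exists_isPathSeq.1 hp
  rw [hm] at hn
  exact ⟨f, rfl, (hf.isGeodesic hm).mono (by exact_mod_cast hn)⟩

theorem IsGeodesic.isPathSeq_comp (hX : IsGeodesic A X n) {g : ℕ → ℕ} {m : ℕ}
    (hg : ∀ i ≤ m, g i ≤ n) (hinj : Set.InjOn g (Set.Iic m))
    (hstep : ∀ i < m, g (i + 1) = g i + 1 ∨ A (X (g i)) (X (g (i + 1)))) :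
    IsPathSeq A (X ∘ g) m := by
  refine ⟨fun i hi j hj hij => hinj hi hj (hX.injOn (hg i hi) (hg j hj) hij), fun i hi => ?_⟩
  rcases hstep i hi with h | h
  · simpa [h] using hX.1 (g i) (by have := hg (i + 1) hi; omega)
  · exact h

end Geodesics

theorem KQuasiTrans.adj_of_isPathSeq {A : V → V → Prop} {k : ℕ} (hqt : KQuasiTrans A k)
    {f : ℕ → V} (hf : IsPathSeq A f k) : A (f 0) (f k) ∨ A (f k) (f 0) :=
  hqt _ _ hf.hasPathN

/-- The index sequence `a, s, s + 1, …, t, w, w + 1, …`. -/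
def jumpIdx (a s t w : ℕ) (i : ℕ) : ℕ :=
  if i = 0 then a else if i ≤ t + 1 - s then s + i - 1 else w + i - (t + 2 - s)

section QuasiTransitive

variable {A : V → V → Prop} {X : ℕ → V} {n k : ℕ}

theorem IsGeodesic.isPathSeq_jumpIdx (hX : IsGeodesic A X n) {a s t w b : ℕ}
    (hst : s ≤ t) (hwb : w ≤ b) (ha : a ≤ n) (ht : t ≤ n) (hb : b ≤ n)
    (has : a < s ∨ t < a) (haw : a < w ∨ b < a) (hsw : t < w ∨ b < s)
    (h₁ : A (X a) (X s)) (h₂ : A (X t) (X w)) :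
    IsPathSeq A (X ∘ jumpIdx a s t w) (t + 2 - s + (b - w)) := by
  refine hX.isPathSeq_comp (fun i hi => ?_) (fun i hi j hj hij => ?_) fun i hi => ?_
  · unfold jumpIdx; split_ifs <;> omega
  · simp only [Set.mem_Iic, jumpIdx] at hi hj hij
    split_ifs at hij <;> omega
  · have : jumpIdx a s t w (i + 1) = jumpIdx a s t w i + 1 ∨
        (jumpIdx a s t w i = a ∧ jumpIdx a s t w (i + 1) = s) ∨
        (jumpIdx a s t w i = t ∧ jumpIdx a s t w (i + 1) = w) := by
      simp only [jumpIdx, Nat.add_one_ne_zero, if_false]; split_ifs <;> omega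
    rcases this with h | ⟨h, h'⟩ | ⟨h, h'⟩
    · exact .inl h
    · rw [h, h']; exact .inr h₁
    · rw [h, h']; exact .inr h₂

theorem IsGeodesic.arc_of_jumpIdx (hX : IsGeodesic A X n) (hqt : KQuasiTrans A k)
    {a s t w b : ℕ} (hst : s ≤ t) (hwb : w ≤ b) (ha : a ≤ n) (ht : t ≤ n)
    (has : a < s ∨ t < a) (haw : a < w ∨ b < a) (hsw : t < w ∨ b < s)
    (hk : k = t + 2 - s + (b - w)) (hba : b + 2 ≤ a)
    (h₁ : A (X a) (X s)) (h₂ : A (X t) (X w)) : A (X a) (X b) := by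
  subst hk
  have hend : jumpIdx a s t w (t + 2 - s + (b - w)) = b := by unfold jumpIdx; split_ifs <;> omega
  have := hqt.adj_of_isPathSeq
    (hX.isPathSeq_jumpIdx hst hwb ha ht (by omega) has haw hsw h₁ h₂)
  rw [Function.comp_apply, Function.comp_apply, hend] at this
  exact this.resolve_right (hX.not_arc hba ha)

theorem IsGeodesic.arc_of_segment (hX : IsGeodesic A X n) (hqt : KQuasiTrans A k) {c : ℕ}
    (hk : 2 ≤ k) (hc : c + k ≤ n) : A (X (c + k)) (X c) := by
  have := hqt.adj_of_isPathSeq (hX.isPathSeq_comp (g := (c + ·)) (m := k)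
    (fun i hi => by omega) (fun i _ j _ h => by simpa using h) fun i _ => .inl rfl)
  simp only [Function.comp, add_zero] at this
  exact this.resolve_left (hX.not_arc (by omega) hc)

theorem IsGeodesic.arc_zero (hX : IsGeodesic A X (k + 2)) (hqt : KQuasiTrans A k)
    (hk : 2 ≤ k) : A (X k) (X 0) := by
  simpa using hX.arc_of_segment hqt (c := 0) hk (by omega)

/-- From `x_a → x_s` the path `x_a, x_s, …, x_k, x_0, …, x_{s-2}` of length `k` gives
`x_a → x_{s-2}`. -/
theorem IsGeodesic.arc_sub_two (hX : IsGeodesic A X (k + 2)) (hqt : KQuasiTrans A k)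
    {a s : ℕ} (ha : k < a) (ha' : a ≤ k + 2) (hs : 2 ≤ s) (hsk : s ≤ k) (h : A (X a) (X s)) :
    A (X a) (X (s - 2)) :=
  hX.arc_of_jumpIdx hqt (t := k) (w := 0) hsk (Nat.zero_le _) ha' (by omega) (by omega)
    (by omega) (by omega) (by omega) (by omega) h (hX.arc_zero hqt (by omega))

theorem IsGeodesic.arc_top_zero (hX : IsGeodesic A X (k + 2)) (hqt : KQuasiTrans A k)
    (hk : 2 ≤ k) : A (X (k + 2)) (X 0) := by
  simpa using hX.arc_sub_two hqt (s := 2) (by omega) le_rfl le_rfl hk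
    (by simpa [add_comm] using hX.arc_of_segment hqt (c := 2) hk (by omega))

theorem IsGeodesic.arc_succ_sub_two_sub_two_mul (hX : IsGeodesic A X (k + 2))
    (hqt : KQuasiTrans A k) (hk : 3 ≤ k) :
    ∀ j, 2 * j + 3 ≤ k → A (X (k + 1)) (X (k - 2 - 2 * j)) := by
  intro j
  induction j with
  | zero =>
    intro _
    exact hX.arc_of_jumpIdx hqt (s := k + 2) (t := k + 2) (w := 0) le_rfl (Nat.zero_le _)
      (by omega) le_rfl (by omega) (by omega) (by omega) (by omega) (by omega)
      (hX.1 (k + 1) (by omega)) (hX.arc_top_zero hqt (by omega))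
  | succ j ih =>
    intro hj
    have := hX.arc_sub_two hqt (a := k + 1) (s := k - 2 - 2 * j) (by omega) (by omega)
      (by omega) (by omega) (ih (by omega))
    rwa [show k - 2 - 2 * j - 2 = k - 2 - 2 * (j + 1) by omega] at this

theorem IsGeodesic.exists_isPathSeq_succ_zero (hX : IsGeodesic A X (k + 2))
    (hqt : KQuasiTrans A k) (hk : 3 ≤ k) (hko : Odd k) :
    ∃ g : ℕ → ℕ, IsPathSeq A (X ∘ g) (k - 1) ∧ g 0 = k + 1 ∧ g (k - 1) = 0 ∧
      ∀ i ≤ k - 1, g i ≠ 1 ∧ g i ≤ k + 2 := by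
  obtain rfl | hk5 : k = 3 ∨ 5 ≤ k := by obtain ⟨r, rfl⟩ := hko; omega
  · -- `x_4, x_5, x_0`
    refine ⟨jumpIdx 4 5 5 0, hX.isPathSeq_jumpIdx (b := 0) le_rfl le_rfl (by omega) le_rfl
      (by omega) (by omega) (by omega) (by omega) (hX.1 4 (by omega))
      (hX.arc_top_zero hqt (by omega)), rfl, rfl, fun i hi => ?_⟩
    unfold jumpIdx; split_ifs <;> omega
  · -- `x_{k+1}, x_3, x_4, …, x_k, x_0`
    have h3 : A (X (k + 1)) (X 3) := by
      have := hX.arc_succ_sub_two_sub_two_mul hqt hk ((k - 5) / 2) (by omega)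
      rwa [show k - 2 - 2 * ((k - 5) / 2) = 3 by obtain ⟨r, rfl⟩ := hko; omega] at this
    have hpath := hX.isPathSeq_jumpIdx (b := 0) (by omega) le_rfl (by omega) (by omega)
      (by omega) (by omega) (by omega) (by omega) h3 (hX.arc_zero hqt (by omega))
    rw [show k + 2 - 3 + (0 - 0) = k - 1 by omega] at hpath
    refine ⟨jumpIdx (k + 1) 3 k 0, hpath, rfl, ?_, fun i hi => ?_⟩ <;>
      (unfold jumpIdx; split_ifs <;> omega)

theorem IsGeodesic.arc_succ_of_arc_zero (hX : IsGeodesic A X (k + 2)) (hqt : KQuasiTrans A k)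
    (hloop : ∀ v : V, ¬ A v v) (hk : 3 ≤ k) (hko : Odd k) {y : V} (hy : A (X 0) y) :
    A (X (k + 1)) y := by
  obtain ⟨g, hg, hg0, hgk, hg1⟩ := hX.exists_isPathSeq_succ_zero hqt hk hko
  have hnew : ∀ i ≤ k - 1, (X ∘ g) i ≠ y := by
    intro i hi hXy
    obtain ⟨hne, hle⟩ := hg1 i hi
    rw [Function.comp_apply] at hXy
    rcases (show g i = 0 ∨ 2 ≤ g i by omega) with h | h
    · rw [h] at hXy
      exact hloop _ (hXy ▸ hy)
    · exact hX.not_arc (i := 0) h hle (hXy ▸ hy)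
  -- the path `x_{k+1} ⇝ x_0 → y` has length `k`
  have hpath := hg.snoc (by rwa [Function.comp_apply, hgk]) hnew
  rw [show k - 1 + 1 = k by omega] at hpath
  have hadj := hqt.adj_of_isPathSeq hpath
  rw [Function.update_self, Function.update_of_ne (by omega), Function.comp_apply, hg0] at hadj
  refine hadj.resolve_right fun hyx => ?_
  -- otherwise `x_0 → y → x_{k+1}` would be a shortcut
  have := (ddist_le_add_one_of_arc (u := X 0) hyx).trans
    (add_le_add_left (ddist_le_add_one_of_arc (u := X 0) hy) 1)
  rw [ddist_self, hX.2 (k + 1) (by omega)] at this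
  norm_cast at this
  omega

theorem IsGeodesic.outDegIn_add_le [Finite V] {C : Set V} (hX : IsGeodesic A X (k + 2))
    (hqt : KQuasiTrans A k) (hloop : ∀ v : V, ¬ A v v) (hk : 3 ≤ k) (hko : Odd k)
    (hXC : ∀ j ≤ k + 2, X j ∈ C) :
    outDegIn A C (X 0) + (k - 1) / 2 ≤ outDegIn A C (X (k + 1)) := by
  -- the out-neighbours `x_{k+2}, x_{k-2}, x_{k-4}, …, x_3` of `x_{k+1}`
  let T : Finset ℕ := insert (k + 2) ((Finset.range ((k - 3) / 2)).image fun j => k - 2 - 2 * j)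
  have hT : ∀ j ∈ T, 3 ≤ j ∧ j ≤ k + 2 ∧ A (X (k + 1)) (X j) := by
    simp only [T, Finset.mem_insert, Finset.mem_image, Finset.mem_range]
    rintro j (rfl | ⟨i, hi, rfl⟩)
    · exact ⟨by omega, le_rfl, hX.1 (k + 1) (by omega)⟩
    · exact ⟨by omega, by omega, hX.arc_succ_sub_two_sub_two_mul hqt hk i (by omega)⟩
  have hTcard : T.card = (k - 1) / 2 := by
    rw [Finset.card_insert_of_notMem (by simp; omega), Finset.card_image_of_injOn
      (fun i hi j hj h => by simp only [Finset.coe_range, Set.mem_Iio] at hi hj h; omega),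
      Finset.card_range]
    omega
  have hE : (X '' T).ncard = (k - 1) / 2 := by
    rw [(hX.injOn.mono fun j hj => Set.mem_Iic.2 (hT j hj).2.1).ncard_image,
      Set.ncard_coe_finset, hTcard]
  rw [← hE]
  refine outDegIn_add_ncard_le (fun y _ hy => hX.arc_succ_of_arc_zero hqt hloop hk hko hy)
    ?_ ?_ ?_ <;> rintro _ ⟨j, hj, rfl⟩
  · exact hXC j (hT j hj).2.1
  · exact (hT j hj).2.2
  · exact hX.not_arc (by have := (hT j hj).1; omega) (hT j hj).2.1

end QuasiTransitive

theorem kqt_odd_degree_king_general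
    [Fintype V] (A : V → V → Prop) (hloop : ∀ v : V, ¬ A v v)
    (k : ℕ) (hk : 3 ≤ k) (hko : Odd k) (hqt : KQuasiTrans A k)
    (C : Set V) (hC : IsInitialStrongComponent A C)
    (huniq : ∀ S : Set V, IsInitialStrongComponent A S → S = C)
    (v : V) (hv : v ∈ C)
    (hlb : (maxOutDegIn A C : ℤ) - ((k - 1) / 2 : ℕ) < (outDegIn A C v : ℤ)) :
    IsRKing A (k + 1) v := by
  intro u
  by_contra! hfar
  obtain ⟨X, rfl, hX⟩ := exists_isGeodesic (n := k + 2)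
    (reaches_of_mem_unique_initial hC huniq hv u) (Order.add_one_le_of_lt hfar)
  have hXC : ∀ j ≤ k + 2, X j ∈ C := fun j hj =>
    hC.1.mem_of_reaches hv (hX.reaches (Nat.zero_le j) hj)
      ((hX.reaches hj le_rfl).trans (reaches_of_arc (hX.arc_top_zero hqt (by omega))))
  have hdeg := hX.outDegIn_add_le hqt hloop hk hko hXC
  have hmax := outDegIn_le_maxOutDegIn (A := A) (hXC (k + 1) (by omega))
  omega

/-- odd `k ≥ 3`, unique initial strong component `C`; any vertex of `C`
whose out-degree in `C` exceeds `Δ⁺_C − (k−1)/2` is a `(k+1)`-king of `D`. -/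
theorem kqt_odd_degree_king
    [Fintype V] (A : V → V → Prop) (hloop : ∀ v : V, ¬ A v v)
    (k : ℕ) (hk : 3 ≤ k) (hko : Odd k) (hqt : KQuasiTrans A k)
    (C : Set V) (hC : IsInitialStrongComponent A C)
    (huniq : ∀ S : Set V, IsInitialStrongComponent A S → S = C)
    (v : V) (hv : v ∈ C)
    (hub : outDegIn A C v ≤ maxOutDegIn A C)
    (hlb : (maxOutDegIn A C : ℤ) - ((k - 1) / 2 : ℕ) < (outDegIn A C v : ℤ)) :
    IsRKing A (k + 1) v :=
  kqt_odd_degree_king_general A hloop k hk hko hqt C hC huniq v hv hlb
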